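/- Let G be a cancellative 3-uniform hypergraph with at least one edge, and let x be a nonnegative vector with ‖x‖_1 = 1 and P_G(x) = λ^(1)(G) having the minimum number of non-zero entries among all such maximizers. If S = {i : x_i ≠ 0} is the support of x, then λ^(1)(G) = (|S| - 1) / (2|S|^2). -/
import Mathlib


open Finset

/-- A 3-uniform hypergraph on vertex set `Fin n`, given by its edge set:
every edge is a 3-element subset. -/
def IsThreeGraph {n : ℕ} (E : Finset (Finset (Fin n))) : Prop :=
  ∀ e ∈ E, e.card = 3

/-- `G` is cancellative: there are no three distinct edges `A, B, C` with `B △ C ⊆ A`. -/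
def Cancellative {n : ℕ} (E : Finset (Finset (Fin n))) : Prop :=
  ∀ A ∈ E, ∀ B ∈ E, ∀ C ∈ E, A ≠ B → A ≠ C → B ≠ C → ¬ (symmDiff B C ⊆ A)

/-- The `p`-norm of a vector `x ∈ ℝ^n`. -/
noncomputable def pNorm {n : ℕ} (p : ℝ) (x : Fin n → ℝ) : ℝ :=
  (∑ i, |x i| ^ p) ^ (1 / p)

/-- The polynomial form of a 3-graph. -/
noncomputable def polyForm {n : ℕ} (E : Finset (Finset (Fin n))) (x : Fin n → ℝ) : ℝ :=
  3 * ∑ e ∈ E, ∏ i ∈ e, x i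

/-- The `p`-spectral radius of a 3-graph: the maximum of the polynomial form over the
unit sphere of the `p`-norm. -/
noncomputable def specRad {n : ℕ} (p : ℝ) (E : Finset (Finset (Fin n))) : ℝ :=
  sSup {r : ℝ | ∃ x : Fin n → ℝ, pNorm p x = 1 ∧ polyForm E x = r}

/-- The part (among the three parts of sizes ⌊n/3⌋, ⌊(n+1)/3⌋, ⌊(n+2)/3⌋) containing vertex `i`. -/
def part3 (n : ℕ) (i : Fin n) : Fin 3 :=
  if (i : ℕ) < n / 3 then 0 else if (i : ℕ) < n / 3 + (n + 1) / 3 then 1 else 2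

/-- The complete 3-partite 3-graph `T_3(n)` with part sizes ⌊n/3⌋, ⌊(n+1)/3⌋, ⌊(n+2)/3⌋:
edges are the triples having exactly one vertex in each part. -/
def T3 (n : ℕ) : Finset (Finset (Fin n)) :=
  Finset.univ.filter fun e => ∀ k : Fin 3, (e.filter fun i => part3 n i = k).card = 1

/-- `t_3(n)`, the number of edges of `T_3(n)`. -/
def t3 (n : ℕ) : ℕ := (n / 3) * ((n + 1) / 3) * ((n + 2) / 3)

/-- Two 3-graphs on `Fin n` are isomorphic. -/
def IsoTo {n : ℕ} (E₁ E₂ : Finset (Finset (Fin n))) : Prop :=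
  ∃ σ : Fin n ≃ Fin n, ∀ e : Finset (Fin n), e ∈ E₁ ↔ e.map σ.toEmbedding ∈ E₂

/-- Two vertices are adjacent if some edge contains both. -/
def Adjacent {n : ℕ} (E : Finset (Finset (Fin n))) (u v : Fin n) : Prop :=
  u ≠ v ∧ ∃ e ∈ E, u ∈ e ∧ v ∈ e

/-- The link of a vertex `v`: all 2-element sets `S` with `S ∪ {v} ∈ E`. -/
def link {n : ℕ} (E : Finset (Finset (Fin n))) (v : Fin n) : Finset (Finset (Fin n)) :=
  (E.filter fun e => v ∈ e).image fun e => e.erase v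

/-- The degree of a vertex: the size of its link. -/
def degree {n : ℕ} (E : Finset (Finset (Fin n))) (v : Fin n) : ℕ := (link E v).card

/-- The transfer `T_v^u(G)`: delete all edges containing `v` and replace `v` for `u`
in all edges containing `u` but not `v`. -/
def transfer {n : ℕ} (E : Finset (Finset (Fin n))) (u v : Fin n) : Finset (Finset (Fin n)) :=
  (E.filter fun e => v ∉ e) ∪
    ((E.filter fun e => u ∈ e ∧ v ∉ e).image fun e => insert v (e.erase u))

/-- A 3-graph is complete 3-partite: there is a partition of the vertices into three classes
such that the edges are exactly the triples with one vertex in each class. -/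
def IsComplete3Partite {n : ℕ} (E : Finset (Finset (Fin n))) : Prop :=
  ∃ P : Fin n → Fin 3,
    ∀ e : Finset (Fin n), e ∈ E ↔ ∀ k : Fin 3, (e.filter fun i => P i = k).card = 1

/-- `G` has maximum `p`-spectral radius among all cancellative 3-graphs on `n` vertices. -/
def MaxSpectral {n : ℕ} (p : ℝ) (E : Finset (Finset (Fin n))) : Prop :=
  IsThreeGraph E ∧ Cancellative E ∧
    ∀ E' : Finset (Finset (Fin n)), IsThreeGraph E' → Cancellative E' →
      specRad p E' ≤ specRad p E

section Aux

lemma pNorm_one_eq {n : ℕ} (x : Fin n → ℝ) : pNorm 1 x = ∑ i, |x i| := by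
  simp [pNorm]

lemma erase_comm' {α : Type*} [DecidableEq α] (s : Finset α) (a b : α) :
    (s.erase a).erase b = (s.erase b).erase a := by
  ext t; simp [Finset.mem_erase]; tauto

noncomputable def dP {n : ℕ} (E : Finset (Finset (Fin n))) (x : Fin n → ℝ) (i : Fin n) : ℝ :=
  ∑ e ∈ E.filter (fun e => i ∈ e), ∏ t ∈ e.erase i, x t

lemma polyForm_update2 {n : ℕ} (E : Finset (Finset (Fin n))) (x : Fin n → ℝ)
    {i j : Fin n} (hij : i ≠ j) (a b : ℝ) :
    polyForm E (Function.update (Function.update x j b) i a)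
      = 3 * ((∑ e ∈ E.filter (fun e => i ∉ e ∧ j ∉ e), ∏ t ∈ e, x t)
          + a * (∑ e ∈ E.filter (fun e => i ∈ e ∧ j ∉ e), ∏ t ∈ e.erase i, x t)
          + b * (∑ e ∈ E.filter (fun e => i ∉ e ∧ j ∈ e), ∏ t ∈ e.erase j, x t)
          + a * b * (∑ e ∈ E.filter (fun e => i ∈ e ∧ j ∈ e), ∏ t ∈ (e.erase i).erase j, x t)) := by
  set z := Function.update (Function.update x j b) i a with hz
  have hprod : ∀ e : Finset (Fin n), ∏ t ∈ e, z t =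
      if i ∈ e then (if j ∈ e then a * (b * ∏ t ∈ (e.erase i).erase j, x t)
                     else a * ∏ t ∈ e.erase i, x t)
      else (if j ∈ e then b * ∏ t ∈ e.erase j, x t else ∏ t ∈ e, x t) := by
    intro e
    by_cases hi : i ∈ e
    · rw [hz]
      rw [Finset.prod_update_of_mem hi]
      rw [show e \ {i} = e.erase i from Finset.sdiff_singleton_eq_erase i e]
      by_cases hj : j ∈ e
      · have hj' : j ∈ e.erase i := Finset.mem_erase.2 ⟨hij.symm, hj⟩
        rw [Finset.prod_update_of_mem hj', Finset.sdiff_singleton_eq_erase]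
        simp [hi, hj]
      · have hj' : j ∉ e.erase i := fun h => hj (Finset.mem_of_mem_erase h)
        rw [Finset.prod_update_of_notMem hj']
        simp [hi, hj]
    · rw [hz]
      rw [Finset.prod_update_of_notMem hi]
      by_cases hj : j ∈ e
      · rw [Finset.prod_update_of_mem hj, Finset.sdiff_singleton_eq_erase]
        simp [hi, hj]
      · rw [Finset.prod_update_of_notMem hj]
        simp [hi, hj]
  unfold polyForm
  rw [Finset.sum_congr rfl (fun e _ => hprod e)]
  rw [← Finset.sum_filter_add_sum_filter_not E (fun e => i ∈ e)]
  rw [← Finset.sum_filter_add_sum_filter_not (E.filter (fun e => i ∈ e)) (fun e => j ∈ e)]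
  rw [← Finset.sum_filter_add_sum_filter_not (E.filter (fun e => i ∉ e)) (fun e => j ∈ e)]
  rw [Finset.filter_filter, Finset.filter_filter, Finset.filter_filter, Finset.filter_filter]
  have h1 : ∀ e ∈ E.filter (fun e => i ∈ e ∧ j ∈ e),
      (if i ∈ e then (if j ∈ e then a * (b * ∏ t ∈ (e.erase i).erase j, x t)
                     else a * ∏ t ∈ e.erase i, x t)
      else (if j ∈ e then b * ∏ t ∈ e.erase j, x t else ∏ t ∈ e, x t))
      = a * (b * ∏ t ∈ (e.erase i).erase j, x t) := by
    intro e he; rw [Finset.mem_filter] at he; simp [he.2.1, he.2.2]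
  have h2 : ∀ e ∈ E.filter (fun e => i ∈ e ∧ ¬ j ∈ e),
      (if i ∈ e then (if j ∈ e then a * (b * ∏ t ∈ (e.erase i).erase j, x t)
                     else a * ∏ t ∈ e.erase i, x t)
      else (if j ∈ e then b * ∏ t ∈ e.erase j, x t else ∏ t ∈ e, x t))
      = a * ∏ t ∈ e.erase i, x t := by
    intro e he; rw [Finset.mem_filter] at he; simp [he.2.1, he.2.2]
  have h3 : ∀ e ∈ E.filter (fun e => ¬ i ∈ e ∧ j ∈ e),
      (if i ∈ e then (if j ∈ e then a * (b * ∏ t ∈ (e.erase i).erase j, x t)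
                     else a * ∏ t ∈ e.erase i, x t)
      else (if j ∈ e then b * ∏ t ∈ e.erase j, x t else ∏ t ∈ e, x t))
      = b * ∏ t ∈ e.erase j, x t := by
    intro e he; rw [Finset.mem_filter] at he; simp [he.2.1, he.2.2]
  have h4 : ∀ e ∈ E.filter (fun e => ¬ i ∈ e ∧ ¬ j ∈ e),
      (if i ∈ e then (if j ∈ e then a * (b * ∏ t ∈ (e.erase i).erase j, x t)
                     else a * ∏ t ∈ e.erase i, x t)
      else (if j ∈ e then b * ∏ t ∈ e.erase j, x t else ∏ t ∈ e, x t))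
      = ∏ t ∈ e, x t := by
    intro e he; rw [Finset.mem_filter] at he; simp [he.2.1, he.2.2]
  rw [Finset.sum_congr rfl h1, Finset.sum_congr rfl h2, Finset.sum_congr rfl h3,
    Finset.sum_congr rfl h4]
  simp only [← Finset.mul_sum, mul_assoc]
  ring

lemma dP_split {n : ℕ} (E : Finset (Finset (Fin n))) (x : Fin n → ℝ) {i j : Fin n} (hij : i ≠ j) :
    dP E x i = (∑ e ∈ E.filter (fun e => i ∈ e ∧ j ∉ e), ∏ t ∈ e.erase i, x t)
      + x j * ∑ e ∈ E.filter (fun e => i ∈ e ∧ j ∈ e), ∏ t ∈ (e.erase i).erase j, x t := by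
  unfold dP
  rw [← Finset.sum_filter_add_sum_filter_not (E.filter (fun e => i ∈ e)) (fun e => j ∈ e),
    Finset.filter_filter, Finset.filter_filter, Finset.mul_sum]
  have h1 : ∀ e ∈ E.filter (fun e => i ∈ e ∧ j ∈ e),
      (∏ t ∈ e.erase i, x t) = x j * ∏ t ∈ (e.erase i).erase j, x t := by
    intro e he
    rw [Finset.mem_filter] at he
    exact (Finset.mul_prod_erase _ _ (Finset.mem_erase.2 ⟨hij.symm, he.2.2⟩)).symm
  rw [Finset.sum_congr rfl h1]
  have : E.filter (fun e => i ∈ e ∧ ¬ j ∈ e) = E.filter (fun e => i ∈ e ∧ j ∉ e) := rfl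
  rw [this]
  ring

lemma euler {n : ℕ} (E : Finset (Finset (Fin n))) (hE : IsThreeGraph E) (x : Fin n → ℝ) :
    ∑ i, x i * dP E x i = polyForm E x := by
  unfold dP polyForm
  have h1 : ∀ i : Fin n, x i * ∑ e ∈ E.filter (fun e => i ∈ e), ∏ t ∈ e.erase i, x t
      = ∑ e ∈ E, if i ∈ e then x i * ∏ t ∈ e.erase i, x t else 0 := by
    intro i
    rw [Finset.mul_sum, Finset.sum_filter]
  rw [Finset.sum_congr rfl (fun i _ => h1 i), Finset.sum_comm, Finset.mul_sum]
  refine Finset.sum_congr rfl (fun e he => ?_)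
  have h2 : ∑ i : Fin n, (if i ∈ e then x i * ∏ t ∈ e.erase i, x t else 0)
      = ∑ i ∈ e, x i * ∏ t ∈ e.erase i, x t := by
    rw [← Finset.sum_filter]
    congr 1
    simp [Finset.filter_univ_mem]
  rw [h2, Finset.sum_congr rfl (fun i hi => Finset.mul_prod_erase e x hi)]
  rw [Finset.sum_const, hE e he]
  ring

lemma specRad_bdd {n : ℕ} (E : Finset (Finset (Fin n))) :
    BddAbove {r : ℝ | ∃ x : Fin n → ℝ, pNorm 1 x = 1 ∧ polyForm E x = r} := by
  refine ⟨3 * E.card, ?_⟩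
  rintro r ⟨x, hx1, rfl⟩
  rw [pNorm_one_eq] at hx1
  have habs : ∀ i, |x i| ≤ 1 := by
    intro i
    rw [← hx1]
    exact Finset.single_le_sum (fun t _ => abs_nonneg (x t)) (Finset.mem_univ i)
  have hprod : ∀ e : Finset (Fin n), ∏ i ∈ e, x i ≤ 1 := by
    intro e
    calc ∏ i ∈ e, x i ≤ |∏ i ∈ e, x i| := le_abs_self _
    _ = ∏ i ∈ e, |x i| := by rw [Finset.abs_prod]
    _ ≤ 1 := Finset.prod_le_one (fun i _ => abs_nonneg _) (fun i _ => habs i)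
  unfold polyForm
  have : ∑ e ∈ E, ∏ i ∈ e, x i ≤ ∑ e ∈ E, (1:ℝ) := Finset.sum_le_sum (fun e _ => hprod e)
  rw [Finset.sum_const] at this
  simp at this
  nlinarith

lemma le_specRad {n : ℕ} (E : Finset (Finset (Fin n))) (y : Fin n → ℝ)
    (hy : pNorm 1 y = 1) : polyForm E y ≤ specRad 1 E :=
  le_csSup (specRad_bdd E) ⟨y, hy, rfl⟩

lemma sum_offDiag_eq {n : ℕ} (s : Finset (Fin n)) (x : Fin n → ℝ) :
    ∑ p ∈ s.offDiag, x p.1 * x p.2 = (∑ i ∈ s, x i)^2 - ∑ i ∈ s, (x i)^2 := by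
  have h := Finset.sum_union (Finset.disjoint_diag_offDiag s)
    (f := fun p : Fin n × Fin n => x p.1 * x p.2)
  rw [Finset.diag_union_offDiag] at h
  rw [Finset.sum_product] at h
  rw [Finset.sum_diag] at h
  have h2 : ∑ i ∈ s, ∑ j ∈ s, x i * x j = (∑ i ∈ s, x i)^2 := by
    rw [← Finset.sum_mul_sum]; ring
  rw [h2] at h
  simp only [← sq] at h
  linarith

lemma sigma2_eq {n : ℕ} (e : Finset (Fin n)) (he : e.card = 3) (x : Fin n → ℝ) :
    2 * ∑ i ∈ e, ∏ t ∈ e.erase i, x t = ∑ p ∈ e.offDiag, x p.1 * x p.2 := by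
  obtain ⟨a, b, c, hab, hac, hbc, rfl⟩ := Finset.card_eq_three.1 he
  rw [sum_offDiag_eq]
  have h1 : ({a, b, c} : Finset (Fin n)).erase a = {b, c} := by
    rw [Finset.erase_insert]; simp [hab, hac]
  have h2 : ({a, b, c} : Finset (Fin n)).erase b = {a, c} := by
    ext t; simp [Finset.mem_erase, Finset.mem_insert]; constructor
    · rintro ⟨h, (rfl|rfl|rfl)⟩ <;> tauto
    · rintro (rfl|rfl) <;> exact ⟨by tauto, by tauto⟩
  have h3 : ({a, b, c} : Finset (Fin n)).erase c = {a, b} := by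
    ext t; simp [Finset.mem_erase, Finset.mem_insert]; constructor
    · rintro ⟨h, (rfl|rfl|rfl)⟩ <;> tauto
    · rintro (rfl|rfl) <;> exact ⟨by tauto, by tauto⟩
  rw [Finset.sum_insert (by simp [hab, hac]), Finset.sum_insert (by simp [hbc]),
    Finset.sum_singleton, h1, h2, h3]
  rw [Finset.sum_insert (by simp [hab, hac]), Finset.sum_insert (by simp [hbc]),
    Finset.sum_singleton]
  rw [Finset.sum_insert (by simp [hab, hac]), Finset.sum_insert (by simp [hbc]),
    Finset.sum_singleton]
  rw [Finset.prod_insert (by simp [hbc]), Finset.prod_singleton,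
    Finset.prod_insert (by simp [hac]), Finset.prod_singleton,
    Finset.prod_insert (by simp [hab]), Finset.prod_singleton]
  ring

lemma sum_update2 {n : ℕ} (x : Fin n → ℝ) {i j : Fin n} (hij : i ≠ j) (a b : ℝ) :
    ∑ t, Function.update (Function.update x j b) i a t
      = ∑ t, x t + (a - x i) + (b - x j) := by
  rw [Finset.sum_update_of_mem (Finset.mem_univ i)]
  have hj : j ∈ (Finset.univ : Finset (Fin n)) \ {i} := by simp [hij.symm]
  rw [Finset.sum_update_of_mem hj]
  have h1 : ∑ t, x t = x i + ∑ t ∈ Finset.univ \ {i}, x t := by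
    rw [Finset.sdiff_singleton_eq_erase, Finset.add_sum_erase _ _ (Finset.mem_univ i)]
  have h2 : ∑ t ∈ Finset.univ \ {i}, x t = x j + ∑ t ∈ (Finset.univ \ {i}) \ {j}, x t := by
    rw [Finset.sdiff_singleton_eq_erase (s := Finset.univ \ {i}),
      Finset.add_sum_erase _ _ hj]
  linarith

end Aux


/-- For a cancellative 3-graph `G` with at least one edge and `x` a nonnegative unit
eigenvector to `λ^(1)(G)` with the minimum possible number of non-zero entries and
support `S`, one has `λ^(1)(G) = (|S| - 1)/(2|S|²)`. -/
theorem specRad_one_eq_support_formula {n : ℕ} (E : Finset (Finset (Fin n)))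
    (hE : IsThreeGraph E) (hC : Cancellative E) (hne : E.Nonempty)
    (x : Fin n → ℝ) (hx0 : ∀ i, 0 ≤ x i) (hxn : pNorm 1 x = 1)
    (hxe : polyForm E x = specRad 1 E)
    (hmin : ∀ y : Fin n → ℝ, (∀ i, 0 ≤ y i) → pNorm 1 y = 1 →
      polyForm E y = specRad 1 E →
      (Finset.univ.filter fun i => x i ≠ 0).card ≤ (Finset.univ.filter fun i => y i ≠ 0).card) :
    specRad 1 E =
      (((Finset.univ.filter fun i => x i ≠ 0).card : ℝ) - 1) /
        (2 * ((Finset.univ.filter fun i => x i ≠ 0).card : ℝ) ^ 2) := by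
  classical
  set S : Finset (Fin n) := Finset.univ.filter (fun i => x i ≠ 0) with hS
  set lam : ℝ := specRad 1 E with hlamdef
  -- basic facts
  have hxsum : ∑ i, x i = 1 := by
    have h := hxn
    rw [pNorm_one_eq] at h
    rw [← h]
    exact Finset.sum_congr rfl fun i _ => (abs_of_nonneg (hx0 i)).symm
  have hmemS : ∀ i, i ∈ S ↔ x i ≠ 0 := fun i => by simp [hS]
  have hxpos : ∀ i ∈ S, 0 < x i := fun i hi =>
    lt_of_le_of_ne (hx0 i) (Ne.symm ((hmemS i).1 hi))
  have hxzero : ∀ i, i ∉ S → x i = 0 := fun i hi => by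
    by_contra h; exact hi ((hmemS i).2 h)
  have hSsum : ∑ i ∈ S, x i = 1 := by
    rw [hS, Finset.sum_filter_ne_zero]
    exact hxsum
  -- the 1/9 lower bound
  have hlam9 : 1/9 ≤ lam := by
    obtain ⟨e0, he0⟩ := hne
    set y : Fin n → ℝ := fun i => if i ∈ e0 then 1/3 else 0 with hy
    have hynorm : pNorm 1 y = 1 := by
      rw [pNorm_one_eq]
      have : ∀ i, |y i| = if i ∈ e0 then (1:ℝ)/3 else 0 := by
        intro i; rw [hy]; by_cases h : i ∈ e0 <;> simp [h]
      rw [Finset.sum_congr rfl (fun i _ => this i), Finset.sum_ite_mem,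
        Finset.univ_inter, Finset.sum_const, hE e0 he0]
      norm_num
    have h1 : (1:ℝ)/9 ≤ polyForm E y := by
      unfold polyForm
      have hterm : ∏ i ∈ e0, y i = (1/3)^3 := by
        have : ∀ i ∈ e0, y i = 1/3 := fun i hi => by simp [hy, hi]
        rw [Finset.prod_congr rfl this, Finset.prod_const, hE e0 he0]
      have hpos : ∀ e ∈ E, 0 ≤ ∏ i ∈ e, y i := by
        intro e _
        refine Finset.prod_nonneg fun i _ => ?_
        rw [hy]; by_cases h : i ∈ e0 <;> simp [h]
      have := Finset.single_le_sum hpos he0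
      rw [hterm] at this
      nlinarith
    exact le_trans h1 (le_specRad E y hynorm)
  -- support contains an edge, so 3 ≤ |S|
  have hs3 : 3 ≤ S.card := by
    have hsum_ne : ∑ e ∈ E, ∏ i ∈ e, x i ≠ 0 := by
      intro h
      have h9 : (1:ℝ)/9 ≤ polyForm E x := by rw [hxe]; exact hlam9
      unfold polyForm at h9
      rw [h] at h9
      norm_num at h9
    obtain ⟨e, heE, hprod⟩ := Finset.exists_ne_zero_of_sum_ne_zero hsum_ne
    have hsub : e ⊆ S := fun t ht =>
      (hmemS t).2 ((Finset.prod_ne_zero_iff.1 hprod) t ht)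
    calc 3 = e.card := (hE e heE).symm
    _ ≤ S.card := Finset.card_le_card hsub
  have hs0 : 0 < S.card := by omega
  -- KKT: dP is constant (= lam) on the support
  have hkkt : ∀ i : Fin n, ∀ j ∈ S, dP E x i ≤ dP E x j := by
    intro i j hj
    by_contra hlt
    push_neg at hlt
    have hij : i ≠ j := by rintro rfl; exact absurd rfl (ne_of_gt hlt)
    set D : ℝ := ∑ e ∈ E.filter (fun e => i ∈ e ∧ j ∈ e), ∏ t ∈ (e.erase i).erase j, x t with hD
    have hD0 : 0 ≤ D := Finset.sum_nonneg fun e _ => Finset.prod_nonneg fun t _ => hx0 t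
    set d : ℝ := dP E x i - dP E x j with hd
    have hdpos : 0 < d := by rw [hd]; linarith
    set ε : ℝ := min (x j) (d / (D + 1)) with hε
    have hεpos : 0 < ε := lt_min (hxpos j hj) (div_pos hdpos (by linarith))
    have hεj : ε ≤ x j := min_le_left _ _
    have hεd : ε * (D + 1) ≤ d := by
      rw [← le_div_iff₀ (by linarith : (0:ℝ) < D + 1)]
      exact min_le_right _ _
    set z : Fin n → ℝ := Function.update (Function.update x j (x j - ε)) i (x i + ε) with hzdef
    have hz0 : ∀ t, 0 ≤ z t := by
      intro t
      rw [hzdef]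
      rcases eq_or_ne t i with rfl | hti
      · rw [Function.update_self]; linarith [hx0 t]
      · rw [Function.update_of_ne hti]
        rcases eq_or_ne t j with rfl | htj
        · rw [Function.update_self]; linarith
        · rw [Function.update_of_ne htj]; exact hx0 t
    have hzsum : ∑ t, z t = 1 := by
      rw [hzdef, sum_update2 x hij, hxsum]; ring
    have hznorm : pNorm 1 z = 1 := by
      rw [pNorm_one_eq, Finset.sum_congr rfl fun t _ => abs_of_nonneg (hz0 t)]
      exact hzsum
    -- value of polyForm at z versus x
    have hxrepr : x = Function.update (Function.update x j (x j)) i (x i) := by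
      rw [Function.update_eq_self, Function.update_eq_self]
    have hzval := polyForm_update2 E x hij (x i + ε) (x j - ε)
    have hxval := polyForm_update2 E x hij (x i) (x j)
    rw [← hxrepr] at hxval
    have hdpi := dP_split E x hij
    have hdpj := dP_split E x hij.symm
    have hfilt : E.filter (fun e => j ∈ e ∧ i ∈ e) = E.filter (fun e => i ∈ e ∧ j ∈ e) := by
      apply Finset.filter_congr; intro e _; exact and_comm
    have hfilt2 : E.filter (fun e => j ∈ e ∧ i ∉ e) = E.filter (fun e => i ∉ e ∧ j ∈ e) := by
      apply Finset.filter_congr; intro e _; exact and_comm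
    have herase : ∀ e ∈ E.filter (fun e => i ∈ e ∧ j ∈ e),
        ∏ t ∈ (e.erase j).erase i, x t = ∏ t ∈ (e.erase i).erase j, x t := by
      intro e _; rw [erase_comm']
    rw [hfilt, hfilt2, Finset.sum_congr rfl herase] at hdpj
    have hdelta : polyForm E z = polyForm E x + 3 * (ε * d - ε^2 * D) := by
      rw [hzdef, hzval, hxval, hd, hdpi, hdpj, hD]
      ring
    have hgt : polyForm E x < polyForm E z := by
      rw [hdelta]
      nlinarith [mul_pos hεpos hεpos]
    have := le_specRad E z hznorm
    rw [← hlamdef, ← hxe] at this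
    linarith
  have hdPeq : ∀ i ∈ S, ∀ j ∈ S, dP E x i = dP E x j := fun i hi j hj =>
    le_antisymm (hkkt i j hj) (hkkt j i hi)
  have hSne : S.Nonempty := Finset.card_pos.1 hs0
  obtain ⟨i0, hi0⟩ := hSne
  have hdPlam : ∀ i ∈ S, dP E x i = lam := by
    have heul := euler E hE x
    have h1 : ∑ i, x i * dP E x i = ∑ i ∈ S, x i * dP E x i := by
      rw [hS, Finset.sum_filter]
      refine Finset.sum_congr rfl fun i _ => ?_
      by_cases h : x i ≠ 0
      · simp [h]
      · push_neg at h; simp [h]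
    have h2 : ∑ i ∈ S, x i * dP E x i = dP E x i0 * ∑ i ∈ S, x i := by
      rw [Finset.mul_sum]
      refine Finset.sum_congr rfl fun i hi => ?_
      rw [hdPeq i hi i0 hi0]; ring
    intro i hi
    rw [hdPeq i hi i0 hi0]
    rw [h1, h2, hSsum, mul_one] at heul
    rw [heul, hxe, hlamdef]
  -- covering: every pair in the support is in an edge inside the support
  have hcov : ∀ i ∈ S, ∀ j ∈ S, i ≠ j → ∃ e ∈ E, i ∈ e ∧ j ∈ e ∧ e ⊆ S := by
    intro i hi j hj hij
    by_contra hno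
    push_neg at hno
    have hD0 : ∀ e ∈ E.filter (fun e => i ∈ e ∧ j ∈ e),
        ∏ t ∈ (e.erase i).erase j, x t = 0 := by
      intro e he
      rw [Finset.mem_filter] at he
      obtain ⟨w, hw, hwS⟩ := Finset.not_subset.1 (hno e he.1 he.2.1 he.2.2)
      have hwi : w ≠ i := fun h => hwS (h ▸ hi)
      have hwj : w ≠ j := fun h => hwS (h ▸ hj)
      exact Finset.prod_eq_zero
        (Finset.mem_erase.2 ⟨hwj, Finset.mem_erase.2 ⟨hwi, hw⟩⟩) (hxzero w hwS)
    set z : Fin n → ℝ := Function.update (Function.update x j 0) i (x i + x j) with hzdef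
    have hz0 : ∀ t, 0 ≤ z t := by
      intro t
      rw [hzdef]
      rcases eq_or_ne t i with rfl | hti
      · rw [Function.update_self]; linarith [hx0 t, hx0 j]
      · rw [Function.update_of_ne hti]
        rcases eq_or_ne t j with rfl | htj
        · rw [Function.update_self]
        · rw [Function.update_of_ne htj]; exact hx0 t
    have hzsum : ∑ t, z t = 1 := by
      rw [hzdef, sum_update2 x hij, hxsum]; ring
    have hznorm : pNorm 1 z = 1 := by
      rw [pNorm_one_eq, Finset.sum_congr rfl fun t _ => abs_of_nonneg (hz0 t)]
      exact hzsum
    have hxrepr : x = Function.update (Function.update x j (x j)) i (x i) := by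
      rw [Function.update_eq_self, Function.update_eq_self]
    have hzval := polyForm_update2 E x hij (x i + x j) 0
    have hxval := polyForm_update2 E x hij (x i) (x j)
    rw [← hxrepr] at hxval
    have hdpi := dP_split E x hij
    have hdpj := dP_split E x hij.symm
    have hfilt : E.filter (fun e => j ∈ e ∧ i ∈ e) = E.filter (fun e => i ∈ e ∧ j ∈ e) := by
      apply Finset.filter_congr; intro e _; exact and_comm
    have hfilt2 : E.filter (fun e => j ∈ e ∧ i ∉ e) = E.filter (fun e => i ∉ e ∧ j ∈ e) := by
      apply Finset.filter_congr; intro e _; exact and_comm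
    have herase : ∀ e ∈ E.filter (fun e => i ∈ e ∧ j ∈ e),
        ∏ t ∈ (e.erase j).erase i, x t = ∏ t ∈ (e.erase i).erase j, x t := by
      intro e _; rw [erase_comm']
    rw [hfilt, hfilt2, Finset.sum_congr rfl herase] at hdpj
    have hDzero : ∑ e ∈ E.filter (fun e => i ∈ e ∧ j ∈ e), ∏ t ∈ (e.erase i).erase j, x t = 0 :=
      Finset.sum_eq_zero hD0
    have hdij : dP E x i = dP E x j := hdPeq i hi j hj
    have hzeq : polyForm E z = polyForm E x := by
      rw [hzdef, hzval, hxval]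
      have e1 : (∑ e ∈ E.filter (fun e => i ∈ e ∧ j ∉ e), ∏ t ∈ e.erase i, x t)
          = dP E x i := by rw [hdpi, hDzero]; ring
      have e2 : (∑ e ∈ E.filter (fun e => i ∉ e ∧ j ∈ e), ∏ t ∈ e.erase j, x t)
          = dP E x j := by rw [hdpj, hDzero]; ring
      rw [e1, e2, hDzero, hdij]
      ring
    have hzrad : polyForm E z = specRad 1 E := by rw [hzeq, hxe]
    have hcard := hmin z hz0 hznorm hzrad
    have hzsupp : Finset.univ.filter (fun t => z t ≠ 0) = S.erase j := by
      ext t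
      simp only [Finset.mem_filter, Finset.mem_univ, true_and, Finset.mem_erase]
      rw [hzdef]
      rcases eq_or_ne t i with rfl | hti
      · rw [Function.update_self]
        constructor
        · intro _; exact ⟨hij, hi⟩
        · intro _
          have := hxpos t hi
          have := hx0 j
          intro h; linarith [hxpos j hj]
      · rw [Function.update_of_ne hti]
        rcases eq_or_ne t j with rfl | htj
        · rw [Function.update_self]; simp
        · rw [Function.update_of_ne htj]
          rw [hmemS t]
          tauto
    rw [hzsupp, Finset.card_erase_of_mem hj] at hcard
    omega
  -- linearity: inside the support two distinct edges share at most one vertex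
  have hlin : ∀ e ∈ E, e ⊆ S → ∀ e' ∈ E, e' ⊆ S → e ≠ e' → Disjoint e.offDiag e'.offDiag := by
    intro e heE heS e' heE' heS' hee
    by_contra hdisj
    obtain ⟨p, hp, hp'⟩ := Finset.not_disjoint_iff.1 hdisj
    rw [Finset.mem_offDiag] at hp hp'
    have hcard2 : 2 ≤ (e ∩ e').card := by
      have hsub : ({p.1, p.2} : Finset (Fin n)) ⊆ e ∩ e' := by
        intro t ht
        rcases Finset.mem_insert.1 ht with rfl | ht
        · exact Finset.mem_inter.2 ⟨hp.1, hp'.1⟩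
        · rw [Finset.mem_singleton] at ht
          subst ht
          exact Finset.mem_inter.2 ⟨hp.2.1, hp'.2.1⟩
      calc 2 = ({p.1, p.2} : Finset (Fin n)).card := by
            rw [Finset.card_insert_of_notMem (by simp [hp.2.2]), Finset.card_singleton]
      _ ≤ (e ∩ e').card := Finset.card_le_card hsub
    have he3 := hE e heE
    have he3' := hE e' heE'
    -- third vertices
    have hc : ∃ c, e \ e' = {c} := by
      have h1 : (e \ e').card ≤ 1 := by
        have := Finset.card_sdiff_add_card_inter e e'
        omega
      have h2 : (e \ e').Nonempty := by
        rw [Finset.sdiff_nonempty]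
        intro hsub
        exact hee (Finset.eq_of_subset_of_card_le hsub (by omega))
      obtain ⟨c, hc⟩ := h2
      exact ⟨c, Finset.eq_singleton_iff_unique_mem.2
        ⟨hc, fun b hb => Finset.card_le_one.1 h1 b hb c hc⟩⟩
    have hd : ∃ d, e' \ e = {d} := by
      have hcard2' : 2 ≤ (e' ∩ e).card := by rw [Finset.inter_comm]; exact hcard2
      have h1 : (e' \ e).card ≤ 1 := by
        have := Finset.card_sdiff_add_card_inter e' e
        omega
      have h2 : (e' \ e).Nonempty := by
        rw [Finset.sdiff_nonempty]
        intro hsub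
        exact hee (Finset.eq_of_subset_of_card_le hsub (by omega)).symm
      obtain ⟨d, hd⟩ := h2
      exact ⟨d, Finset.eq_singleton_iff_unique_mem.2
        ⟨hd, fun b hb => Finset.card_le_one.1 h1 b hb d hd⟩⟩
    obtain ⟨c, hc⟩ := hc
    obtain ⟨d, hd⟩ := hd
    have hce : c ∈ e ∧ c ∉ e' := by
      have : c ∈ e \ e' := hc ▸ Finset.mem_singleton_self c
      exact ⟨(Finset.mem_sdiff.1 this).1, (Finset.mem_sdiff.1 this).2⟩
    have hde : d ∈ e' ∧ d ∉ e := by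
      have : d ∈ e' \ e := hd ▸ Finset.mem_singleton_self d
      exact ⟨(Finset.mem_sdiff.1 this).1, (Finset.mem_sdiff.1 this).2⟩
    have hcS : c ∈ S := heS hce.1
    have hdS : d ∈ S := heS' hde.1
    have hcd : c ≠ d := fun h => hce.2 (h ▸ hde.1)
    obtain ⟨A, hA, hcA, hdA, _⟩ := hcov c hcS d hdS hcd
    have hAe : A ≠ e := fun h => hde.2 (h ▸ hdA)
    have hAe' : A ≠ e' := fun h => hce.2 (h ▸ hcA)
    refine hC A hA e heE e' heE' hAe hAe' hee ?_
    intro t ht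
    rw [Finset.mem_symmDiff] at ht
    rcases ht with ⟨ht1, ht2⟩ | ⟨ht1, ht2⟩
    · have : t ∈ e \ e' := Finset.mem_sdiff.2 ⟨ht1, ht2⟩
      rw [hc, Finset.mem_singleton] at this
      exact this ▸ hcA
    · have : t ∈ e' \ e := Finset.mem_sdiff.2 ⟨ht1, ht2⟩
      rw [hd, Finset.mem_singleton] at this
      exact this ▸ hdA
  -- the counting identity
  have hcount : (S.card : ℝ) * lam = ∑ e ∈ E.filter (fun e => e ⊆ S), ∑ i ∈ e, ∏ t ∈ e.erase i, x t := by
    have h1 : ∑ i ∈ S, dP E x i = (S.card : ℝ) * lam := by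
      rw [Finset.sum_congr rfl hdPlam, Finset.sum_const, nsmul_eq_mul]
    rw [← h1]
    unfold dP
    have h2 : ∀ i ∈ S, ∑ e ∈ E.filter (fun e => i ∈ e), ∏ t ∈ e.erase i, x t
        = ∑ e ∈ E, if i ∈ e then ∏ t ∈ e.erase i, x t else 0 := fun i _ =>
      Finset.sum_filter _ _
    rw [Finset.sum_congr rfl h2, Finset.sum_comm]
    rw [← Finset.sum_filter_add_sum_filter_not E (fun e => e ⊆ S)]
    have h3 : ∀ e ∈ E.filter (fun e => ¬ e ⊆ S), ∑ i ∈ S, (if i ∈ e then ∏ t ∈ e.erase i, x t else 0) = 0 := by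
      intro e he
      rw [Finset.mem_filter] at he
      refine Finset.sum_eq_zero fun i hiS => ?_
      by_cases hie : i ∈ e
      · simp only [hie, if_true]
        obtain ⟨w, hw, hwS⟩ := Finset.not_subset.1 he.2
        have hwi : w ≠ i := fun h => hwS (h ▸ hiS)
        exact Finset.prod_eq_zero (Finset.mem_erase.2 ⟨hwi, hw⟩) (hxzero w hwS)
      · simp [hie]
    rw [Finset.sum_congr rfl h3, Finset.sum_const, smul_zero, add_zero]
    refine Finset.sum_congr rfl fun e he => ?_
    rw [Finset.mem_filter] at he
    rw [← Finset.sum_filter]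
    congr 1
    rw [Finset.filter_mem_eq_inter, Finset.inter_eq_right.2 he.2]
  -- the sum over pairs bound
  have hpairs : 2 * ((S.card : ℝ) * lam) ≤ 1 - ∑ i ∈ S, (x i)^2 := by
    rw [hcount, Finset.mul_sum]
    have h4 : ∀ e ∈ E.filter (fun e => e ⊆ S),
        2 * ∑ i ∈ e, ∏ t ∈ e.erase i, x t = ∑ p ∈ e.offDiag, x p.1 * x p.2 := by
      intro e he
      rw [Finset.mem_filter] at he
      exact sigma2_eq e (hE e he.1) x
    rw [Finset.sum_congr rfl h4]
    have hdisj : (↑(E.filter (fun e => e ⊆ S)) : Set (Finset (Fin n))).PairwiseDisjoint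
        (fun e => e.offDiag) := by
      intro e he e' he' hee
      simp only [Finset.coe_filter, Set.mem_setOf_eq] at he he'
      exact hlin e he.1 he.2 e' he'.1 he'.2 hee
    rw [← Finset.sum_biUnion hdisj]
    have hsub : (E.filter (fun e => e ⊆ S)).biUnion (fun e => e.offDiag) ⊆ S.offDiag := by
      intro p hp
      rw [Finset.mem_biUnion] at hp
      obtain ⟨e, he, hpe⟩ := hp
      rw [Finset.mem_filter] at he
      rw [Finset.mem_offDiag] at hpe ⊢
      exact ⟨he.2 hpe.1, he.2 hpe.2.1, hpe.2.2⟩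
    have hmono := Finset.sum_le_sum_of_subset_of_nonneg hsub
      (fun p _ _ => mul_nonneg (hx0 p.1) (hx0 p.2))
    have heq := sum_offDiag_eq S x
    rw [hSsum] at heq
    calc ∑ p ∈ (E.filter (fun e => e ⊆ S)).biUnion (fun e => e.offDiag), x p.1 * x p.2
        ≤ ∑ p ∈ S.offDiag, x p.1 * x p.2 := hmono
    _ = 1 - ∑ i ∈ S, (x i)^2 := by rw [heq]; ring
  -- Cauchy-Schwarz
  have hcs : 1 / (S.card : ℝ) ≤ ∑ i ∈ S, (x i)^2 := by
    have := Finset.sum_mul_sq_le_sq_mul_sq S x (fun _ => 1)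
    simp only [mul_one, one_pow] at this
    rw [hSsum, Finset.sum_const, nsmul_eq_mul, mul_one] at this
    rw [div_le_iff₀ (by exact_mod_cast hs0)]
    nlinarith [this]
  -- final arithmetic
  have hscast : (3:ℝ) ≤ (S.card : ℝ) := by exact_mod_cast hs3
  have hspos : (0:ℝ) < (S.card : ℝ) := by linarith
  have hup : lam ≤ ((S.card : ℝ) - 1) / (2 * (S.card : ℝ)^2) := by
    have hq : 1 ≤ (∑ i ∈ S, (x i)^2) * (S.card:ℝ) := by
      rw [div_le_iff₀ hspos] at hcs; linarith
    rw [le_div_iff₀ (by positivity)]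
    nlinarith [mul_le_mul_of_nonneg_left hpairs hspos.le, hq]
  have hlow : ((S.card : ℝ) - 1) / (2 * (S.card : ℝ)^2) ≤ lam := by
    rw [div_le_iff₀ (by positivity)]
    nlinarith [hlam9, hscast, mul_nonneg (by linarith : (0:ℝ) ≤ 2*(S.card:ℝ)-3) (by linarith : (0:ℝ) ≤ (S.card:ℝ)-3)]
  linarith
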